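/- Let φ : ℝ^D × P → ℝ^K be a parametrised feature map such that for every x ∈ ℝ^D there exists ρ ∈ P with φ(x, ρ) ≠ 0, let D = {(x_n, y_n)}_{n=1}^N be a nonempty finite dataset in ℝ^D × ℝ^Q, let M ≥ 2, and let i ∈ {1,…,M}. Fix functions F_j : ℝ^D → ℝ^Q for all j ≠ i. If λ > M/(M−1), then the infimum of E_λ(F, D) over all choices of F_i of the form F_i(x) = W^i φ(x, ρ^i) with W^i ∈ ℝ^{Q×K} and ρ^i ∈ P is −∞: for every C > 0 there exist W^i and ρ^i with E_λ(F, D) < −C. -/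
import Mathlib


open Finset Matrix

/-- Squared Euclidean norm of a vector in `ℝ^n`. -/
noncomputable def sqNorm {n : ℕ} (v : Fin n → ℝ) : ℝ := ∑ k, (v k) ^ 2

def IsQuad (f : ℝ → ℝ) (a : ℝ) : Prop := ∃ b c, ∀ t, f t = a * t ^ 2 + b * t + c

lemma IsQuad.add {f g : ℝ → ℝ} {a b : ℝ} (hf : IsQuad f a) (hg : IsQuad g b) :
    IsQuad (fun t => f t + g t) (a + b) := by
  obtain ⟨p, q, hf⟩ := hf; obtain ⟨r, s, hg⟩ := hg
  exact ⟨p + r, q + s, fun t => by simp only []; rw [hf, hg]; ring⟩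

lemma IsQuad.sub {f g : ℝ → ℝ} {a b : ℝ} (hf : IsQuad f a) (hg : IsQuad g b) :
    IsQuad (fun t => f t - g t) (a - b) := by
  obtain ⟨p, q, hf⟩ := hf; obtain ⟨r, s, hg⟩ := hg
  exact ⟨p - r, q - s, fun t => by simp only []; rw [hf, hg]; ring⟩

lemma IsQuad.const_mul {f : ℝ → ℝ} {a : ℝ} (c : ℝ) (hf : IsQuad f a) :
    IsQuad (fun t => c * f t) (c * a) := by
  obtain ⟨p, q, hf⟩ := hf
  exact ⟨c * p, c * q, fun t => by simp only []; rw [hf]; ring⟩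

lemma IsQuad.const (c : ℝ) : IsQuad (fun _ => c) 0 :=
  ⟨0, c, fun t => by ring⟩

lemma IsQuad.sum {ι : Type*} (s : Finset ι) (f : ι → ℝ → ℝ) (a : ι → ℝ)
    (h : ∀ j ∈ s, IsQuad (f j) (a j)) :
    IsQuad (fun t => ∑ j ∈ s, f j t) (∑ j ∈ s, a j) := by
  induction s using Finset.cons_induction with
  | empty => simpa using IsQuad.const 0
  | cons j s hj ih =>
      simp only [Finset.sum_cons]
      exact (h j (Finset.mem_cons_self j s)).add
        (ih fun k hk => h k (Finset.mem_cons_of_mem hk))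

lemma sqNorm_affine {Q : ℕ} (p q : Fin Q → ℝ) :
    IsQuad (fun t => sqNorm (p + t • q)) (sqNorm q) := by
  refine ⟨2 * ∑ k, p k * q k, sqNorm p, fun t => ?_⟩
  simp only [sqNorm, Pi.add_apply, Pi.smul_apply, smul_eq_mul]
  have : ∀ k : Fin Q, (p k + t * q k) ^ 2 = q k ^ 2 * t ^ 2 + 2 * (p k * q k) * t + p k ^ 2 := by
    intro k; ring
  simp_rw [this, Finset.sum_add_distrib, ← Finset.sum_mul, Finset.mul_sum]

lemma sqNorm_smul {Q : ℕ} (c : ℝ) (v : Fin Q → ℝ) : sqNorm (c • v) = c ^ 2 * sqNorm v := by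
  simp [sqNorm, Finset.mul_sum, mul_pow]

lemma sqNorm_nonneg {Q : ℕ} (v : Fin Q → ℝ) : 0 ≤ sqNorm v :=
  Finset.sum_nonneg fun k _ => sq_nonneg _

lemma keyQuad {Q M : ℕ} (hM : 2 ≤ M) (lam : ℝ) (i : Fin M)
    (g : Fin M → Fin Q → ℝ) (u yv : Fin Q → ℝ) :
    IsQuad (fun t => (1 / (M : ℝ)) * ∑ j, sqNorm (Function.update g i (t • u) j - yv)
        - lam * ((1 / (M : ℝ)) * ∑ j,
            sqNorm (Function.update g i (t • u) j
              - (1 / (M : ℝ)) • ∑ j', Function.update g i (t • u) j')))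
      ((1 / (M : ℝ)) * (1 - lam * ((M : ℝ) - 1) / (M : ℝ)) * sqNorm u) := by
  classical
  set s : Fin Q → ℝ := ∑ j ∈ Finset.univ.erase i, g j with hs
  have hsum : ∀ t : ℝ, (∑ j', Function.update g i (t • u) j') = t • u + s := by
    intro t
    rw [← Finset.add_sum_erase _ _ (Finset.mem_univ i), Function.update_self]
    congr 1
    exact Finset.sum_congr rfl fun j hj => Function.update_of_ne (Finset.ne_of_mem_erase hj) _ _
  have h1 : ∀ t : ℝ, (∑ j, sqNorm (Function.update g i (t • u) j - yv))
      = sqNorm ((-yv) + t • u) + ∑ j ∈ Finset.univ.erase i, sqNorm (g j - yv) := by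
    intro t
    rw [← Finset.add_sum_erase _ _ (Finset.mem_univ i), Function.update_self]
    congr 1
    · congr 1; ext k; simp; ring
    · exact Finset.sum_congr rfl fun j hj => by
        rw [Function.update_of_ne (Finset.ne_of_mem_erase hj)]
  have h2 : ∀ t : ℝ, (∑ j, sqNorm (Function.update g i (t • u) j
        - (1 / (M : ℝ)) • ∑ j', Function.update g i (t • u) j'))
      = sqNorm ((-(1 / (M : ℝ)) • s) + t • ((1 - 1 / (M : ℝ)) • u))
        + ∑ j ∈ Finset.univ.erase i,
            sqNorm ((g j - (1 / (M : ℝ)) • s) + t • (-((1 / (M : ℝ)) • u))) := by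
    intro t
    rw [← Finset.add_sum_erase _ _ (Finset.mem_univ i), Function.update_self, hsum t]
    congr 1
    · congr 1; ext k; simp; ring
    · refine Finset.sum_congr rfl fun j hj => ?_
      rw [Function.update_of_ne (Finset.ne_of_mem_erase hj)]
      congr 1; ext k; simp; ring
  have hfe : (fun t => (1 / (M : ℝ)) * ∑ j, sqNorm (Function.update g i (t • u) j - yv)
        - lam * ((1 / (M : ℝ)) * ∑ j,
            sqNorm (Function.update g i (t • u) j
              - (1 / (M : ℝ)) • ∑ j', Function.update g i (t • u) j')))
      = fun t : ℝ => (1 / (M : ℝ)) * (sqNorm ((-yv) + t • u)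
            + ∑ j ∈ Finset.univ.erase i, sqNorm (g j - yv))
        - lam * ((1 / (M : ℝ)) * (sqNorm ((-(1 / (M : ℝ)) • s) + t • ((1 - 1 / (M : ℝ)) • u))
            + ∑ j ∈ Finset.univ.erase i,
              sqNorm ((g j - (1 / (M : ℝ)) • s) + t • (-((1 / (M : ℝ)) • u))))) := by
    funext t; rw [h1 t, h2 t]
  rw [hfe]
  have key : IsQuad (fun t : ℝ => (1 / (M : ℝ)) * (sqNorm ((-yv) + t • u)
            + ∑ j ∈ Finset.univ.erase i, sqNorm (g j - yv))
        - lam * ((1 / (M : ℝ)) * (sqNorm ((-(1 / (M : ℝ)) • s) + t • ((1 - 1 / (M : ℝ)) • u))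
            + ∑ j ∈ Finset.univ.erase i,
              sqNorm ((g j - (1 / (M : ℝ)) • s) + t • (-((1 / (M : ℝ)) • u))))))
      ((1 / (M : ℝ)) * (sqNorm u + ∑ j ∈ Finset.univ.erase i, (0 : ℝ))
        - lam * ((1 / (M : ℝ)) * (sqNorm ((1 - 1 / (M : ℝ)) • u)
            + ∑ j ∈ Finset.univ.erase i, sqNorm (-((1 / (M : ℝ)) • u))))) := by
    refine IsQuad.sub (IsQuad.const_mul _ ?_) (IsQuad.const_mul _ (IsQuad.const_mul _ ?_))
    · exact (sqNorm_affine _ _).add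
        (IsQuad.sum _ _ (fun _ => (0 : ℝ)) fun j _ => by
          simpa using IsQuad.const (sqNorm (g j - yv)))
    · exact (sqNorm_affine _ _).add (IsQuad.sum _ _ _ fun j _ => sqNorm_affine _ _)
  have hMR : (2 : ℝ) ≤ (M : ℝ) := by exact_mod_cast hM
  have hM0 : (M : ℝ) ≠ 0 := by linarith
  have hcoeff : ((1 / (M : ℝ)) * (sqNorm u + ∑ j ∈ Finset.univ.erase i, (0 : ℝ))
        - lam * ((1 / (M : ℝ)) * (sqNorm ((1 - 1 / (M : ℝ)) • u)
            + ∑ j ∈ Finset.univ.erase i, sqNorm (-((1 / (M : ℝ)) • u)))))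
      = (1 / (M : ℝ)) * (1 - lam * ((M : ℝ) - 1) / (M : ℝ)) * sqNorm u := by
    have hcard : ((Finset.univ.erase i).card : ℝ) = (M : ℝ) - 1 := by
      rw [Finset.card_erase_of_mem (Finset.mem_univ i)]
      simp only [Finset.card_univ, Fintype.card_fin]
      have : 1 ≤ M := by omega
      push_cast [Nat.cast_sub this]
      ring
    have hneg : sqNorm (-((1 / (M : ℝ)) • u)) = (1 / (M : ℝ)) ^ 2 * sqNorm u := by
      rw [show -((1 / (M : ℝ)) • u) = (-(1 / (M : ℝ))) • u by ext k; simp, sqNorm_smul]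
      ring
    rw [Finset.sum_const, Finset.sum_const, hneg, sqNorm_smul, nsmul_eq_mul, nsmul_eq_mul, hcard]
    field_simp
    ring
  rwa [hcoeff] at key

/-- The ensemble error `E_λ(F, 𝒟)` of a Modular Regression Network
`F = {Fᵢ}` on the dataset `𝒟 = {(xₙ, yₙ)}`. -/
noncomputable def ensError {D Q M N : ℕ} (lam : ℝ)
    (F : Fin M → (Fin D → ℝ) → (Fin Q → ℝ))
    (x : Fin N → Fin D → ℝ) (y : Fin N → Fin Q → ℝ) : ℝ :=
  (1 / (N : ℝ)) * ∑ n,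
    ((1 / (M : ℝ)) * ∑ i, sqNorm (F i (x n) - y n)
      - lam * ((1 / (M : ℝ)) * ∑ i,
          sqNorm (F i (x n) - (1 / (M : ℝ)) • ∑ j, F j (x n))))

/-- with all modules `Fⱼ`, `j ≠ i`, held fixed and
`λ > M/(M-1)`, the ensemble error is unbounded below over Modular Linear Top
Layer choices of the `i`-th module. -/
theorem ensError_unbounded_below_in_single_module {D K Q M N : ℕ} {P : Type*}
    (hM : 2 ≤ M) (hQ : 1 ≤ Q) (hN : 1 ≤ N) (i : Fin M)
    (φ : (Fin D → ℝ) → P → (Fin K → ℝ)) (hφ : ∀ x, ∃ ρ, φ x ρ ≠ 0)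
    (G : Fin M → (Fin D → ℝ) → (Fin Q → ℝ))
    (x : Fin N → Fin D → ℝ) (y : Fin N → Fin Q → ℝ)
    (lam : ℝ) (hlam : (M : ℝ) / ((M : ℝ) - 1) < lam) (C : ℝ) (hC : 0 < C) :
    ∃ (W : Matrix (Fin Q) (Fin K) ℝ) (ρi : P),
      ensError lam (Function.update G i (fun x => W *ᵥ φ x ρi)) x y < -C := by
  classical
  set n0 : Fin N := ⟨0, hN⟩ with hn0
  obtain ⟨ρ, hρ⟩ := hφ (x n0)
  obtain ⟨k0, hk0⟩ := Function.ne_iff.mp hρ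
  set W0 : Matrix (Fin Q) (Fin K) ℝ := fun _ k => if k = k0 then 1 else 0 with hW0
  set u : Fin N → Fin Q → ℝ := fun n => W0 *ᵥ φ (x n) ρ with hu
  have hu0 : ∀ q : Fin Q, u n0 q = φ (x n0) ρ k0 := by
    intro q
    simp [hu, hW0, Matrix.mulVec, dotProduct]
  -- the quadratic decomposition
  set Kc : ℝ := (1 / (M : ℝ)) * (1 - lam * ((M : ℝ) - 1) / (M : ℝ)) with hKc
  have hquad : IsQuad
      (fun t : ℝ => ensError lam (Function.update G i (fun x => (t • W0) *ᵥ φ x ρ)) x y)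
      ((1 / (N : ℝ)) * ∑ n, Kc * sqNorm (u n)) := by
    have hupd : ∀ (t : ℝ) (n : Fin N) (j : Fin M),
        Function.update G i (fun x => (t • W0) *ᵥ φ x ρ) j (x n)
          = Function.update (fun j => G j (x n)) i (t • u n) j := by
      intro t n j
      rw [Function.apply_update (fun _ h => h (x n)) G i _ j]
      simp [Matrix.smul_mulVec, hu]
    have hfe : (fun t : ℝ => ensError lam (Function.update G i (fun x => (t • W0) *ᵥ φ x ρ)) x y)
        = fun t : ℝ => (1 / (N : ℝ)) * ∑ n,
            ((1 / (M : ℝ)) * ∑ j, sqNorm (Function.update (fun j => G j (x n)) i (t • u n) j - y n)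
              - lam * ((1 / (M : ℝ)) * ∑ j,
                  sqNorm (Function.update (fun j => G j (x n)) i (t • u n) j
                    - (1 / (M : ℝ)) • ∑ j', Function.update (fun j => G j (x n)) i (t • u n) j'))) := by
      funext t
      unfold ensError
      simp_rw [hupd t]
    rw [hfe]
    exact IsQuad.const_mul _ (IsQuad.sum _ _ _ fun n _ => keyQuad hM lam i _ (u n) (y n))
  obtain ⟨b, c, hbc⟩ := hquad
  set a : ℝ := (1 / (N : ℝ)) * ∑ n, Kc * sqNorm (u n) with ha
  -- a < 0
  have hMR : (2 : ℝ) ≤ (M : ℝ) := by exact_mod_cast hM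
  have hNR : (1 : ℝ) ≤ (N : ℝ) := by exact_mod_cast hN
  have hKcneg : Kc < 0 := by
    have h1 : (0 : ℝ) < (M : ℝ) - 1 := by linarith
    rw [div_lt_iff₀ h1] at hlam
    rw [hKc]
    have h2 : (0 : ℝ) < (M : ℝ) := by linarith
    have : 1 - lam * ((M : ℝ) - 1) / (M : ℝ) < 0 := by
      rw [sub_neg, lt_div_iff₀ h2]
      linarith
    have h3 : 0 < 1 / (M : ℝ) := by positivity
    nlinarith
  have hu0pos : 0 < sqNorm (u n0) := by
    have : sqNorm (u n0) = (Q : ℝ) * (φ (x n0) ρ k0) ^ 2 := by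
      simp [sqNorm, hu0]
    rw [this]
    have hQR : (1 : ℝ) ≤ (Q : ℝ) := by exact_mod_cast hQ
    have hk0' : φ (x n0) ρ k0 ≠ 0 := by simpa using hk0
    positivity
  have haneg : a < 0 := by
    have hsum : ∑ n, Kc * sqNorm (u n) < 0 := by
      have hle : ∀ n ∈ (Finset.univ : Finset (Fin N)), Kc * sqNorm (u n) ≤ 0 :=
        fun n _ => mul_nonpos_of_nonpos_of_nonneg (le_of_lt hKcneg) (sqNorm_nonneg _)
      have hlt : Kc * sqNorm (u n0) < 0 := mul_neg_of_neg_of_pos hKcneg hu0pos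
      rw [← Finset.add_sum_erase _ _ (Finset.mem_univ n0)]
      have hrest : (∑ n ∈ Finset.univ.erase n0, Kc * sqNorm (u n)) ≤ 0 :=
        Finset.sum_nonpos fun n _ =>
          mul_nonpos_of_nonpos_of_nonneg (le_of_lt hKcneg) (sqNorm_nonneg _)
      linarith
    have : 0 < 1 / (N : ℝ) := by positivity
    exact mul_neg_of_pos_of_neg this hsum
  -- choose t large
  set t : ℝ := max 1 ((|b| + |c| + C + 1) / (-a)) with hT
  have ht1 : (1 : ℝ) ≤ t := le_max_left _ _
  have ht2 : (|b| + |c| + C + 1) / (-a) ≤ t := le_max_right _ _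
  have hna : 0 < -a := by linarith
  have hat : a * t ≤ -(|b| + |c| + C + 1) := by
    rw [div_le_iff₀ hna] at ht2
    nlinarith
  refine ⟨t • W0, ρ, ?_⟩
  have hval : ensError lam (Function.update G i (fun x => (t • W0) *ᵥ φ x ρ)) x y
      = a * t ^ 2 + b * t + c := hbc t
  rw [hval]
  have hc : c ≤ |c| := le_abs_self c
  have hB : a * t + b ≤ -(|c| + C + 1) := by
    have := le_abs_self b; linarith
  have h2 : t * (a * t + b) ≤ t * (-(|c| + C + 1)) :=
    mul_le_mul_of_nonneg_left hB (by linarith)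
  have h3 : t * (-(|c| + C + 1)) ≤ -(|c| + C + 1) := by
    nlinarith [abs_nonneg c]
  nlinarith [h2, h3, hc]
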